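/- arXiv:2104.11058 — 2 statements merged into one kernel-verified Lean document; each statement's English description precedes it below -/
import Mathlib

section
/- Let σ₁, σ₂ : I → V be a Legendre curve frame and let W₀ ⊆ V be a 2-dimensional linear subspace with W₀ ∩ C(t)^⊥ = {0} for every t ∈ I. Then there exists a polarisation ξ of C whose quadratic differential Q^ξ is nowhere zero on I and such that for every w ∈ W₀ there is a smooth p₁ : I → V making (w, p₁) a linear conserved quantity of d + tξ; that is, the space W of linear conserved quantities of d + tξ satisfies W₀ ⊆ W(0). -/
set_option maxHeartbeats 2000000


noncomputable section

/-- `V = ℝ⁵`. -/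
abbrev V : Type := Fin 5 → ℝ

/-- The symmetric bilinear form of signature (3,2) on `V`. -/
def bB (x y : V) : ℝ := x 0 * y 0 + x 1 * y 1 + x 2 * y 2 - x 3 * y 3 - x 4 * y 4

/-- The skew-symmetric endomorphism `a ∧ b` of `V`. -/
def wedge (a b : V) : V →L[ℝ] V :=
  LinearMap.toContinuousLinearMap
    { toFun := fun x => bB a x • b - bB b x • a
      map_add' := by
        intro x y
        have h1 : bB a (x + y) = bB a x + bB a y := by simp [bB]; ring
        have h2 : bB b (x + y) = bB b x + bB b y := by simp [bB]; ring
        try dsimp only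
        rw [h1, h2]; module
      map_smul' := by
        intro c x
        have h1 : bB a (c • x) = c * bB a x := by simp [bB]; ring
        have h2 : bB b (c • x) = c * bB b x := by simp [bB]; ring
        try dsimp only
        rw [h1, h2]
        try simp only [RingHom.id_apply]
        module }

/-- Membership in `C(t) = span{σ₁(t), σ₂(t)}`. -/
def memC (σ₁ σ₂ : ℝ → V) (t : ℝ) (x : V) : Prop :=
  ∃ a b : ℝ, x = a • σ₁ t + b • σ₂ t

/-- A Legendre curve frame on an open interval `I`. -/
structure LegendreCurveFrame (I : Set ℝ) (σ₁ σ₂ : ℝ → V) : Prop where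
  isOpen : IsOpen I
  ordConn : I.OrdConnected
  smooth₁ : ContDiffOn ℝ (⊤ : ℕ∞) σ₁ I
  smooth₂ : ContDiffOn ℝ (⊤ : ℕ∞) σ₂ I
  indep : ∀ t ∈ I, ∀ a b : ℝ, a • σ₁ t + b • σ₂ t = 0 → a = 0 ∧ b = 0
  iso₁₁ : ∀ t ∈ I, bB (σ₁ t) (σ₁ t) = 0
  iso₁₂ : ∀ t ∈ I, bB (σ₁ t) (σ₂ t) = 0
  iso₂₂ : ∀ t ∈ I, bB (σ₂ t) (σ₂ t) = 0
  d₁₁ : ∀ t ∈ I, bB (deriv σ₁ t) (σ₁ t) = 0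
  d₁₂ : ∀ t ∈ I, bB (deriv σ₁ t) (σ₂ t) = 0
  d₂₁ : ∀ t ∈ I, bB (deriv σ₂ t) (σ₁ t) = 0
  d₂₂ : ∀ t ∈ I, bB (deriv σ₂ t) (σ₂ t) = 0
  rank3 : ∀ t ∈ I,
    Module.finrank ℝ
      ↥(Submodule.span ℝ ({σ₁ t, σ₂ t, deriv σ₁ t, deriv σ₂ t} : Set V)) = 3

/-- The curve `C` is circular. -/
def Circular (I : Set ℝ) (σ₁ σ₂ : ℝ → V) : Prop :=
  ∃ v : V, v ≠ 0 ∧ ∀ t ∈ I, memC σ₁ σ₂ t v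

/-- `ξ(t)` is a sum of endomorphisms `a ∧ b` with `a ∈ C(t)` and `b ∈ C(t)^⊥`. -/
def PolarForm (I : Set ℝ) (σ₁ σ₂ : ℝ → V) (ξ : ℝ → V →L[ℝ] V) : Prop :=
  ∀ t ∈ I, ∃ b₁ b₂ : V,
    bB b₁ (σ₁ t) = 0 ∧ bB b₁ (σ₂ t) = 0 ∧ bB b₂ (σ₁ t) = 0 ∧ bB b₂ (σ₂ t) = 0 ∧
    ξ t = wedge (σ₁ t) b₁ + wedge (σ₂ t) b₂

/-- `Q` represents the quadratic differential of `ξ`. -/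
def IsQuadDiff (I : Set ℝ) (σ₁ σ₂ : ℝ → V) (ξ : ℝ → V →L[ℝ] V) (Q : ℝ → ℝ) : Prop :=
  ∀ t ∈ I, ∃ a b c d : ℝ,
    ξ t (deriv σ₁ t) = a • σ₁ t + b • σ₂ t ∧
    ξ t (deriv σ₂ t) = c • σ₁ t + d • σ₂ t ∧
    Q t = a + d

/-- `ξ` is a polarisation of the curve `C`. -/
def IsPolarisation (I : Set ℝ) (σ₁ σ₂ : ℝ → V) (ξ : ℝ → V →L[ℝ] V) : Prop :=
  ContDiffOn ℝ (⊤ : ℕ∞) ξ I ∧ PolarForm I σ₁ σ₂ ξ ∧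
  ∃ Q : ℝ → ℝ, IsQuadDiff I σ₁ σ₂ ξ Q ∧ ∃ t ∈ I, Q t ≠ 0

/-- `(p₀, p₁)` is a linear conserved quantity of `d + tξ`. -/
def IsLCQ (I : Set ℝ) (σ₁ σ₂ : ℝ → V) (ξ : ℝ → V →L[ℝ] V) (p₀ : V) (p₁ : ℝ → V) : Prop :=
  ContDiffOn ℝ (⊤ : ℕ∞) p₁ I ∧
  (∀ t ∈ I, memC σ₁ σ₂ t (p₁ t)) ∧
  ∀ t ∈ I, deriv p₁ t + ξ t p₀ = 0


-- ===== auxiliary lemmas =====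
section Aux

lemma bB_symm (x y : V) : bB x y = bB y x := by simp only [bB]; ring

lemma bB_add_left (x y w : V) : bB (x + y) w = bB x w + bB y w := by
  simp only [bB, Pi.add_apply]; ring

lemma bB_smul_left (a : ℝ) (x w : V) : bB (a • x) w = a * bB x w := by
  simp only [bB, Pi.smul_apply, smul_eq_mul]; ring

lemma bB_add_right (w x y : V) : bB w (x + y) = bB w x + bB w y := by
  simp only [bB, Pi.add_apply]; ring

lemma bB_smul_right (a : ℝ) (w x : V) : bB w (a • x) = a * bB w x := by
  simp only [bB, Pi.smul_apply, smul_eq_mul]; ring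

lemma bB_smul2_left (a b : ℝ) (x y w : V) :
    bB (a • x + b • y) w = a * bB x w + b * bB y w := by
  simp only [bB, Pi.add_apply, Pi.smul_apply, smul_eq_mul]; ring

lemma bB_smul2_right (a b : ℝ) (w x y : V) :
    bB w (a • x + b • y) = a * bB w x + b * bB w y := by
  simp only [bB, Pi.add_apply, Pi.smul_apply, smul_eq_mul]; ring

lemma wedge_apply (a b x : V) : wedge a b x = bB a x • b - bB b x • a := rfl

lemma bB_abs_le (x y : V) : |bB x y| ≤ 5 * ‖x‖ * ‖y‖ := by
  have hi : ∀ i : Fin 5, |x i * y i| ≤ ‖x‖ * ‖y‖ := by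
    intro i
    rw [abs_mul]
    have h1 : |x i| ≤ ‖x‖ := norm_le_pi_norm x i
    have h2 : |y i| ≤ ‖y‖ := norm_le_pi_norm y i
    exact mul_le_mul h1 h2 (abs_nonneg _) (norm_nonneg _)
  have h0 := abs_le.mp (hi 0); have h1 := abs_le.mp (hi 1)
  have h2 := abs_le.mp (hi 2); have h3 := abs_le.mp (hi 3)
  have h4 := abs_le.mp (hi 4)
  rw [abs_le]
  constructor <;> (simp only [bB]; nlinarith [h0.1, h0.2, h1.1, h1.2, h2.1, h2.2, h3.1, h3.2, h4.1, h4.2])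

lemma isBBM_wedge : IsBoundedBilinearMap ℝ (fun p : V × V => wedge p.1 p.2) := by
  refine ⟨fun a a' b => ?_, fun c a b => ?_, fun a b b' => ?_, fun c a b => ?_,
    ⟨10, by norm_num, ?_⟩⟩
  · apply ContinuousLinearMap.ext; intro x
    simp only [wedge_apply, ContinuousLinearMap.add_apply, bB_add_left]; module
  · apply ContinuousLinearMap.ext; intro x
    simp only [wedge_apply, ContinuousLinearMap.smul_apply, bB_smul_left]; module
  · apply ContinuousLinearMap.ext; intro x
    simp only [wedge_apply, ContinuousLinearMap.add_apply, bB_add_left]; module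
  · apply ContinuousLinearMap.ext; intro x
    simp only [wedge_apply, ContinuousLinearMap.smul_apply, bB_smul_left]; module
  · intro a b
    apply ContinuousLinearMap.opNorm_le_bound
    · positivity
    · intro x
      rw [wedge_apply]
      calc ‖bB a x • b - bB b x • a‖ ≤ ‖bB a x • b‖ + ‖bB b x • a‖ := norm_sub_le _ _
        _ = |bB a x| * ‖b‖ + |bB b x| * ‖a‖ := by rw [norm_smul, norm_smul]; rfl
        _ ≤ (5 * ‖a‖ * ‖x‖) * ‖b‖ + (5 * ‖b‖ * ‖x‖) * ‖a‖ := by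
            gcongr <;> [exact bB_abs_le a x; exact bB_abs_le b x]
        _ ≤ 10 * ‖a‖ * ‖b‖ * ‖x‖ := by nlinarith [norm_nonneg a, norm_nonneg b, norm_nonneg x]

lemma hasDerivAt_bB {f : ℝ → V} {f' : V} {t : ℝ} (hf : HasDerivAt f f' t) (y : V) :
    HasDerivAt (fun s => bB (f s) y) (bB f' y) t := by
  have hc : ∀ i : Fin 5, HasDerivAt (fun s => f s i) (f' i) t := fun i =>
    ((ContinuousLinearMap.proj i : V →L[ℝ] ℝ).hasFDerivAt.comp_hasDerivAt t hf)
  simp only [bB]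
  exact ((((hc 0).mul_const (y 0)).add ((hc 1).mul_const (y 1))).add
    ((hc 2).mul_const (y 2))).sub ((hc 3).mul_const (y 3)) |>.sub ((hc 4).mul_const (y 4))

lemma contDiffOn_bB {f : ℝ → V} {I : Set ℝ} (hf : ContDiffOn ℝ (⊤:ℕ∞) f I) (y : V) :
    ContDiffOn ℝ (⊤:ℕ∞) (fun t => bB (f t) y) I := by
  have hc : ∀ i : Fin 5, ContDiffOn ℝ (⊤:ℕ∞) (fun s => f s i) I := fun i =>
    (ContinuousLinearMap.proj i : V →L[ℝ] ℝ).contDiff.comp_contDiffOn hf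
  simp only [bB]
  exact ((((hc 0).mul contDiffOn_const).add ((hc 1).mul contDiffOn_const)).add
    ((hc 2).mul contDiffOn_const)).sub ((hc 3).mul contDiffOn_const) |>.sub
    ((hc 4).mul contDiffOn_const)

lemma sq3_zero {a b c : ℝ} (h : a^2 + b^2 + c^2 = 0) : a = 0 ∧ b = 0 ∧ c = 0 := by
  refine ⟨?_, ?_, ?_⟩ <;>
    [ (have : a^2 = 0 := by nlinarith [sq_nonneg b, sq_nonneg c]);
      (have : b^2 = 0 := by nlinarith [sq_nonneg a, sq_nonneg c]);
      (have : c^2 = 0 := by nlinarith [sq_nonneg a, sq_nonneg b])] <;>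
    exact pow_eq_zero_iff (by norm_num) |>.mp this

lemma vec5_eq (x : V) (h0 : x 0 = 0) (h1 : x 1 = 0) (h2 : x 2 = 0) (h3 : x 3 = 0)
    (h4 : x 4 = 0) : x = 0 := by
  funext i; fin_cases i <;> simp only [Fin.isValue, Pi.zero_apply] <;> assumption

lemma key_pos (u v x : V) (huu : bB u u = 0) (hvv : bB v v = 0) (huv : bB u v = 0)
    (hind : ∀ a b : ℝ, a • u + b • v = 0 → a = 0 ∧ b = 0)
    (hxu : bB x u = 0) (hxv : bB x v = 0) :
    0 ≤ bB x x ∧ (bB x x = 0 → ∃ a b : ℝ, x = a • u + b • v) := by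
  simp only [bB] at huu hvv huv hxu hxv
  have hdet : u 3 * v 4 - u 4 * v 3 ≠ 0 := by
    intro h0
    have hcomb : ∀ p q : ℝ, p * u 3 - q * v 3 = 0 → p * u 4 - q * v 4 = 0 →
        p • u + (-q) • v = 0 := by
      intro p q h3 h4
      have hsq : (p * u 0 - q * v 0)^2 + (p * u 1 - q * v 1)^2 + (p * u 2 - q * v 2)^2
          = (p * u 3 - q * v 3)^2 + (p * u 4 - q * v 4)^2 := by
        linear_combination p^2*huu + q^2*hvv - 2*p*q*huv
      rw [h3, h4] at hsq
      simp only [ne_eq, OfNat.ofNat_ne_zero, not_false_eq_true, zero_pow, add_zero] at hsq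
      obtain ⟨e0, e1, e2⟩ := sq3_zero hsq
      apply vec5_eq <;>
        simp only [Pi.add_apply, Pi.smul_apply, smul_eq_mul] <;> linarith
    have h45 := hind _ _ (hcomb (v 4) (u 4) (by linarith) (by ring))
    have h35 := hind _ _ (hcomb (v 3) (u 3) (by ring) (by linarith))
    have hu : (1:ℝ) • u + (0:ℝ) • v = 0 := by
      have hsq : u 0 ^2 + u 1 ^2 + u 2 ^2 = 0 := by
        have e3 : u 3 = 0 := by linarith [h35.2]
        have e4 : u 4 = 0 := by linarith [h45.2]
        nlinarith [huu, e3, e4]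
      obtain ⟨e0, e1, e2⟩ := sq3_zero hsq
      apply vec5_eq <;> simp only [Pi.add_apply, Pi.smul_apply, smul_eq_mul] <;>
        [linarith; linarith; linarith; linarith [h35.2]; linarith [h45.2]]
    exact one_ne_zero (hind 1 0 hu).1
  set dt := u 3 * v 4 - u 4 * v 3 with hdt
  set α := (x 3 * v 4 - x 4 * v 3) / dt with hα
  set β := (u 3 * x 4 - u 4 * x 3) / dt with hβ
  have hy3 : x 3 - α * u 3 - β * v 3 = 0 := by
    rw [hα, hβ, div_mul_eq_mul_div, div_mul_eq_mul_div, sub_sub, ← add_div, sub_eq_zero,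
      eq_div_iff hdet, hdt]; ring
  have hy4 : x 4 - α * u 4 - β * v 4 = 0 := by
    rw [hα, hβ, div_mul_eq_mul_div, div_mul_eq_mul_div, sub_sub, ← add_div, sub_eq_zero,
      eq_div_iff hdet, hdt]; ring
  have hbxx : bB x x = (x 0 - α * u 0 - β * v 0)^2 + (x 1 - α * u 1 - β * v 1)^2
      + (x 2 - α * u 2 - β * v 2)^2 := by
    simp only [bB]
    linear_combination 2*α*hxu + 2*β*hxv - α^2*huu - β^2*hvv - 2*α*β*huv
      - (x 3 - α * u 3 - β * v 3)*hy3 - (x 4 - α * u 4 - β * v 4)*hy4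
  constructor
  · rw [hbxx]; positivity
  · intro h0
    rw [hbxx] at h0
    obtain ⟨e0, e1, e2⟩ := sq3_zero h0
    refine ⟨α, β, ?_⟩
    have hz : x - (α • u + β • v) = 0 := by
      apply vec5_eq <;>
        simp only [Pi.sub_apply, Pi.add_apply, Pi.smul_apply, smul_eq_mul] <;> linarith
    exact sub_eq_zero.mp hz

end Aux

/-- given a 2-dimensional subspace `W₀` with `W₀ ∩ C(t)^⊥ = {0}`, there is a
polarisation of `C`, with nowhere-zero quadratic differential, whose space of linear
conserved quantities evaluated at 0 contains `W₀`. -/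
theorem stmt3 (I : Set ℝ) (σ₁ σ₂ : ℝ → V) (h : LegendreCurveFrame I σ₁ σ₂)
    (W₀ : Submodule ℝ V) (hW : Module.finrank ℝ ↥W₀ = 2)
    (hcap : ∀ t ∈ I, ∀ x ∈ W₀, bB x (σ₁ t) = 0 → bB x (σ₂ t) = 0 → x = 0) :
    ∃ ξ : ℝ → V →L[ℝ] V,
      ContDiffOn ℝ (⊤ : ℕ∞) ξ I ∧ PolarForm I σ₁ σ₂ ξ ∧
      (∃ Q : ℝ → ℝ, IsQuadDiff I σ₁ σ₂ ξ Q ∧ ∀ t ∈ I, Q t ≠ 0) ∧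
      ∀ w ∈ W₀, ∃ p₁ : ℝ → V, IsLCQ I σ₁ σ₂ ξ w p₁ := by
  classical
  -- a basis of W₀
  let Bas : Module.Basis (Fin 2) ℝ ↥W₀ := Module.finBasisOfFinrankEq ℝ ↥W₀ hW
  set E1 : V := ((Bas 0 : ↥W₀) : V) with hE1def
  set E2 : V := ((Bas 1 : ↥W₀) : V) with hE2def
  have hE1W : E1 ∈ W₀ := (Bas 0).2
  have hE2W : E2 ∈ W₀ := (Bas 1).2
  have hEind : ∀ a b : ℝ, a • E1 + b • E2 = 0 → a = 0 ∧ b = 0 := by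
    have hli : LinearIndependent ℝ (fun i : Fin 2 => ((Bas i : ↥W₀) : V)) := by
      have := Bas.linearIndependent.map' W₀.subtype (Submodule.ker_subtype W₀)
      exact this
    intro a b hab
    have h2 := Fintype.linearIndependent_iff.mp hli ![a, b] ?_
    · exact ⟨h2 0, h2 1⟩
    · rw [Fin.sum_univ_two]
      simpa using hab
  have hrep : ∀ w ∈ W₀, ∃ l1 l2 : ℝ, w = l1 • E1 + l2 • E2 := by
    intro w hw
    refine ⟨Bas.repr ⟨w, hw⟩ 0, Bas.repr ⟨w, hw⟩ 1, ?_⟩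
    have h3 := Bas.sum_repr ⟨w, hw⟩
    have h4 := congrArg (Subtype.val) h3
    rw [Fin.sum_univ_two] at h4
    simpa using h4.symm
  -- scalar data
  set c11 : ℝ → ℝ := fun t => bB (σ₁ t) E1 with hc11def
  set c12 : ℝ → ℝ := fun t => bB (σ₁ t) E2 with hc12def
  set c21 : ℝ → ℝ := fun t => bB (σ₂ t) E1 with hc21def
  set c22 : ℝ → ℝ := fun t => bB (σ₂ t) E2 with hc22def
  set g11 : ℝ → ℝ := fun t => bB (deriv σ₁ t) E1 with hg11def
  set g12 : ℝ → ℝ := fun t => bB (deriv σ₁ t) E2 with hg12def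
  set g21 : ℝ → ℝ := fun t => bB (deriv σ₂ t) E1 with hg21def
  set g22 : ℝ → ℝ := fun t => bB (deriv σ₂ t) E2 with hg22def
  set dl : ℝ → ℝ := fun t => c11 t * c22 t - c12 t * c21 t with hdldef
  have ec11 : ∀ s : ℝ, bB (σ₁ s) E1 = c11 s := fun s => by rw [hc11def]
  have ec12 : ∀ s : ℝ, bB (σ₁ s) E2 = c12 s := fun s => by rw [hc12def]
  have ec21 : ∀ s : ℝ, bB (σ₂ s) E1 = c21 s := fun s => by rw [hc21def]
  have ec22 : ∀ s : ℝ, bB (σ₂ s) E2 = c22 s := fun s => by rw [hc22def]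
  have eg11 : ∀ s : ℝ, bB (deriv σ₁ s) E1 = g11 s := fun s => by rw [hg11def]
  have eg12 : ∀ s : ℝ, bB (deriv σ₁ s) E2 = g12 s := fun s => by rw [hg12def]
  have eg21 : ∀ s : ℝ, bB (deriv σ₂ s) E1 = g21 s := fun s => by rw [hg21def]
  have eg22 : ∀ s : ℝ, bB (deriv σ₂ s) E2 = g22 s := fun s => by rw [hg22def]
  -- nondegeneracy of the pairing
  have hdlne : ∀ t ∈ I, dl t ≠ 0 := by
    intro t ht h0
    rw [hdldef] at h0
    -- first auxiliary vector
    have hv1 : c12 t • E1 + (-(c11 t)) • E2 = 0 := by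
      apply hcap t ht _ (W₀.add_mem (W₀.smul_mem _ hE1W) (W₀.smul_mem _ hE2W))
      · rw [bB_smul2_left, bB_symm E1 (σ₁ t), bB_symm E2 (σ₁ t), ec11 t, ec12 t]
        ring
      · rw [bB_smul2_left, bB_symm E1 (σ₂ t), bB_symm E2 (σ₂ t), ec21 t, ec22 t]
        linear_combination -h0
    have hc1 := hEind _ _ hv1
    have hv2 : c22 t • E1 + (-(c21 t)) • E2 = 0 := by
      apply hcap t ht _ (W₀.add_mem (W₀.smul_mem _ hE1W) (W₀.smul_mem _ hE2W))
      · rw [bB_smul2_left, bB_symm E1 (σ₁ t), bB_symm E2 (σ₁ t), ec11 t, ec12 t]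
        linear_combination h0
      · rw [bB_smul2_left, bB_symm E1 (σ₂ t), bB_symm E2 (σ₂ t), ec21 t, ec22 t]
        ring
    have hc2 := hEind _ _ hv2
    have hE10 : E1 = 0 := by
      apply hcap t ht _ hE1W
      · rw [bB_symm E1 (σ₁ t), ec11 t]
        linarith [hc1.2]
      · rw [bB_symm E1 (σ₂ t), ec21 t]
        linarith [hc2.2]
    have := hEind 1 0 (by rw [hE10]; simp)
    exact one_ne_zero this.1
  set D11 : ℝ → ℝ := fun t => c22 t / dl t with hD11def
  set D12 : ℝ → ℝ := fun t => -c12 t / dl t with hD12def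
  set D21 : ℝ → ℝ := fun t => -c21 t / dl t with hD21def
  set D22 : ℝ → ℝ := fun t => c11 t / dl t with hD22def
  set S11 : ℝ → ℝ := fun t => D11 t * D11 t + D21 t * D21 t with hS11def
  set S12 : ℝ → ℝ := fun t => D11 t * D12 t + D21 t * D22 t with hS12def
  set S22 : ℝ → ℝ := fun t => D12 t * D12 t + D22 t * D22 t with hS22def
  set zz : ℝ → ℝ := fun t =>
    -((D11 t * g12 t + D12 t * g22 t) - (D21 t * g11 t + D22 t * g21 t)) / dl t with hzzdef
  set b1v : ℝ → V := fun t => (-(S11 t)) • deriv σ₁ t + (-(S12 t)) • deriv σ₂ t with hb1vdef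
  set b2v : ℝ → V := fun t =>
    ((-(S12 t)) • deriv σ₁ t + (-(S22 t)) • deriv σ₂ t) + zz t • σ₁ t with hb2vdef
  -- smoothness of the data
  have hdσ₁s : ContDiffOn ℝ (⊤:ℕ∞) (deriv σ₁) I := h.smooth₁.deriv_of_isOpen h.isOpen (by simp)
  have hdσ₂s : ContDiffOn ℝ (⊤:ℕ∞) (deriv σ₂) I := h.smooth₂.deriv_of_isOpen h.isOpen (by simp)
  have hc11s : ContDiffOn ℝ (⊤:ℕ∞) c11 I := by rw [hc11def]; exact contDiffOn_bB h.smooth₁ E1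
  have hc12s : ContDiffOn ℝ (⊤:ℕ∞) c12 I := by rw [hc12def]; exact contDiffOn_bB h.smooth₁ E2
  have hc21s : ContDiffOn ℝ (⊤:ℕ∞) c21 I := by rw [hc21def]; exact contDiffOn_bB h.smooth₂ E1
  have hc22s : ContDiffOn ℝ (⊤:ℕ∞) c22 I := by rw [hc22def]; exact contDiffOn_bB h.smooth₂ E2
  have hg11s : ContDiffOn ℝ (⊤:ℕ∞) g11 I := by rw [hg11def]; exact contDiffOn_bB hdσ₁s E1
  have hg12s : ContDiffOn ℝ (⊤:ℕ∞) g12 I := by rw [hg12def]; exact contDiffOn_bB hdσ₁s E2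
  have hg21s : ContDiffOn ℝ (⊤:ℕ∞) g21 I := by rw [hg21def]; exact contDiffOn_bB hdσ₂s E1
  have hg22s : ContDiffOn ℝ (⊤:ℕ∞) g22 I := by rw [hg22def]; exact contDiffOn_bB hdσ₂s E2
  have hdls : ContDiffOn ℝ (⊤:ℕ∞) dl I := by
    rw [hdldef]; exact (hc11s.mul hc22s).sub (hc12s.mul hc21s)
  have hD11s : ContDiffOn ℝ (⊤:ℕ∞) D11 I := by rw [hD11def]; exact hc22s.div hdls hdlne
  have hD12s : ContDiffOn ℝ (⊤:ℕ∞) D12 I := by rw [hD12def]; exact hc12s.neg.div hdls hdlne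
  have hD21s : ContDiffOn ℝ (⊤:ℕ∞) D21 I := by rw [hD21def]; exact hc21s.neg.div hdls hdlne
  have hD22s : ContDiffOn ℝ (⊤:ℕ∞) D22 I := by rw [hD22def]; exact hc11s.div hdls hdlne
  have hS11s : ContDiffOn ℝ (⊤:ℕ∞) S11 I := by
    rw [hS11def]; exact (hD11s.mul hD11s).add (hD21s.mul hD21s)
  have hS12s : ContDiffOn ℝ (⊤:ℕ∞) S12 I := by
    rw [hS12def]; exact (hD11s.mul hD12s).add (hD21s.mul hD22s)
  have hS22s : ContDiffOn ℝ (⊤:ℕ∞) S22 I := by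
    rw [hS22def]; exact (hD12s.mul hD12s).add (hD22s.mul hD22s)
  have hzzs : ContDiffOn ℝ (⊤:ℕ∞) zz I := by
    rw [hzzdef]
    exact (((hD11s.mul hg12s).add (hD12s.mul hg22s)).sub
      ((hD21s.mul hg11s).add (hD22s.mul hg21s))).neg.div hdls hdlne
  have hb1vs : ContDiffOn ℝ (⊤:ℕ∞) b1v I := by
    rw [hb1vdef]; exact (hS11s.neg.smul hdσ₁s).add (hS12s.neg.smul hdσ₂s)
  have hb2vs : ContDiffOn ℝ (⊤:ℕ∞) b2v I := by
    rw [hb2vdef]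
    exact ((hS12s.neg.smul hdσ₁s).add (hS22s.neg.smul hdσ₂s)).add (hzzs.smul h.smooth₁)
  -- the polarisation
  refine ⟨fun t => wedge (σ₁ t) (b1v t) + wedge (σ₂ t) (b2v t), ?_, ?_, ?_, ?_⟩
  -- 1. smoothness
  · exact (isBBM_wedge.contDiff.comp_contDiffOn (h.smooth₁.prodMk hb1vs)).add
      (isBBM_wedge.contDiff.comp_contDiffOn (h.smooth₂.prodMk hb2vs))
  -- 2. polar form
  · intro t ht
    refine ⟨b1v t, b2v t, ?_, ?_, ?_, ?_, rfl⟩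
    · rw [hb1vdef, bB_smul2_left, h.d₁₁ t ht, h.d₂₁ t ht]; ring
    · rw [hb1vdef, bB_smul2_left, h.d₁₂ t ht, h.d₂₂ t ht]; ring
    · rw [hb2vdef, bB_add_left, bB_smul2_left, bB_smul_left,
        h.d₁₁ t ht, h.d₂₁ t ht, h.iso₁₁ t ht]; ring
    · rw [hb2vdef, bB_add_left, bB_smul2_left, bB_smul_left,
        h.d₁₂ t ht, h.d₂₂ t ht, h.iso₁₂ t ht]; ring
  -- 3. quadratic differential, nowhere zero
  · refine ⟨fun t => -(bB (b1v t) (deriv σ₁ t)) - bB (b2v t) (deriv σ₂ t), ?_, ?_⟩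
    · intro t ht
      refine ⟨-(bB (b1v t) (deriv σ₁ t)), -(bB (b2v t) (deriv σ₁ t)),
        -(bB (b1v t) (deriv σ₂ t)), -(bB (b2v t) (deriv σ₂ t)), ?_, ?_, by ring⟩
      · show wedge (σ₁ t) (b1v t) (deriv σ₁ t) + wedge (σ₂ t) (b2v t) (deriv σ₁ t) = _
        rw [wedge_apply, wedge_apply,
          bB_symm (σ₁ t) (deriv σ₁ t), h.d₁₁ t ht,
          bB_symm (σ₂ t) (deriv σ₁ t), h.d₁₂ t ht]
        module
      · show wedge (σ₁ t) (b1v t) (deriv σ₂ t) + wedge (σ₂ t) (b2v t) (deriv σ₂ t) = _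
        rw [wedge_apply, wedge_apply,
          bB_symm (σ₁ t) (deriv σ₂ t), h.d₂₁ t ht,
          bB_symm (σ₂ t) (deriv σ₂ t), h.d₂₂ t ht]
        module
    · intro t ht hQ0
      replace hQ0 : -(bB (b1v t) (deriv σ₁ t)) - bB (b2v t) (deriv σ₂ t) = 0 := hQ0
      -- the two auxiliary vectors
      set v1 : V := D11 t • deriv σ₁ t + D12 t • deriv σ₂ t with hv1def
      set v2 : V := D21 t • deriv σ₁ t + D22 t • deriv σ₂ t with hv2def
      have hk1 := key_pos (σ₁ t) (σ₂ t) v1 (h.iso₁₁ t ht) (h.iso₂₂ t ht) (h.iso₁₂ t ht)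
        (h.indep t ht)
        (by rw [hv1def, bB_smul2_left, h.d₁₁ t ht, h.d₂₁ t ht]; ring)
        (by rw [hv1def, bB_smul2_left, h.d₁₂ t ht, h.d₂₂ t ht]; ring)
      have hk2 := key_pos (σ₁ t) (σ₂ t) v2 (h.iso₁₁ t ht) (h.iso₂₂ t ht) (h.iso₁₂ t ht)
        (h.indep t ht)
        (by rw [hv2def, bB_smul2_left, h.d₁₁ t ht, h.d₂₁ t ht]; ring)
        (by rw [hv2def, bB_smul2_left, h.d₁₂ t ht, h.d₂₂ t ht]; ring)
      -- Q t as a sum of two nonnegative quantities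
      have hQsum : -(bB (b1v t) (deriv σ₁ t)) - bB (b2v t) (deriv σ₂ t)
          = bB v1 v1 + bB v2 v2 := by
        simp only [hv1def, hv2def, hb1vdef, hb2vdef, hS11def, hS12def, hS22def,
          bB_add_left, bB_smul_left, bB_add_right, bB_smul_right]
        rw [bB_symm (σ₁ t) (deriv σ₂ t), h.d₂₁ t ht,
          bB_symm (deriv σ₂ t) (deriv σ₁ t)]
        ring
      rw [hQsum] at hQ0
      have hz1 : bB v1 v1 = 0 := by linarith [hk1.1, hk2.1]
      have hz2 : bB v2 v2 = 0 := by linarith [hk1.1, hk2.1]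
      obtain ⟨a1, b1, hvv1⟩ := hk1.2 hz1
      obtain ⟨a2, b2, hvv2⟩ := hk2.2 hz2
      -- recover the derivatives from v1, v2
      have hne : c11 t * c22 t - c12 t * c21 t ≠ 0 := by
        have := hdlne t ht; rwa [hdldef] at this
      have hs11 : c11 t * D11 t + c12 t * D21 t = 1 := by
        rw [hD11def, hD21def, hdldef]; field_simp; ring
      have hs12 : c11 t * D12 t + c12 t * D22 t = 0 := by
        rw [hD12def, hD22def, hdldef]; field_simp; ring
      have hs21 : c21 t * D11 t + c22 t * D21 t = 0 := by
        rw [hD11def, hD21def, hdldef]; field_simp; ring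
      have hs22 : c21 t * D12 t + c22 t * D22 t = 1 := by
        show c21 t * (-c12 t / dl t) + c22 t * (c11 t / dl t) = 1
        rw [mul_div_assoc', mul_div_assoc', ← add_div, div_eq_one_iff_eq (hdlne t ht)]
        show c21 t * -c12 t + c22 t * c11 t = c11 t * c22 t - c12 t * c21 t; ring
      have hder1 : deriv σ₁ t = c11 t • v1 + c12 t • v2 := by
        have : c11 t • v1 + c12 t • v2
            = (c11 t * D11 t + c12 t * D21 t) • deriv σ₁ t
              + (c11 t * D12 t + c12 t * D22 t) • deriv σ₂ t := by
          rw [hv1def, hv2def]; module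
        rw [this, hs11, hs12]; simp
      have hder2 : deriv σ₂ t = c21 t • v1 + c22 t • v2 := by
        have : c21 t • v1 + c22 t • v2
            = (c21 t * D11 t + c22 t * D21 t) • deriv σ₁ t
              + (c21 t * D12 t + c22 t * D22 t) • deriv σ₂ t := by
          rw [hv1def, hv2def]; module
        rw [this, hs21, hs22]; simp
      -- contradiction with rank3
      have hmem1 : deriv σ₁ t ∈ Submodule.span ℝ ({σ₁ t, σ₂ t} : Set V) := by
        rw [hder1, hvv1, hvv2]
        have h1 : σ₁ t ∈ Submodule.span ℝ ({σ₁ t, σ₂ t} : Set V) :=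
          Submodule.subset_span (by simp)
        have h2 : σ₂ t ∈ Submodule.span ℝ ({σ₁ t, σ₂ t} : Set V) :=
          Submodule.subset_span (by simp)
        exact Submodule.add_mem _
          (Submodule.smul_mem _ _ (Submodule.add_mem _ (Submodule.smul_mem _ _ h1)
            (Submodule.smul_mem _ _ h2)))
          (Submodule.smul_mem _ _ (Submodule.add_mem _ (Submodule.smul_mem _ _ h1)
            (Submodule.smul_mem _ _ h2)))
      have hmem2 : deriv σ₂ t ∈ Submodule.span ℝ ({σ₁ t, σ₂ t} : Set V) := by
        rw [hder2, hvv1, hvv2]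
        have h1 : σ₁ t ∈ Submodule.span ℝ ({σ₁ t, σ₂ t} : Set V) :=
          Submodule.subset_span (by simp)
        have h2 : σ₂ t ∈ Submodule.span ℝ ({σ₁ t, σ₂ t} : Set V) :=
          Submodule.subset_span (by simp)
        exact Submodule.add_mem _
          (Submodule.smul_mem _ _ (Submodule.add_mem _ (Submodule.smul_mem _ _ h1)
            (Submodule.smul_mem _ _ h2)))
          (Submodule.smul_mem _ _ (Submodule.add_mem _ (Submodule.smul_mem _ _ h1)
            (Submodule.smul_mem _ _ h2)))
      have hspanle : Submodule.span ℝ ({σ₁ t, σ₂ t, deriv σ₁ t, deriv σ₂ t} : Set V)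
          ≤ Submodule.span ℝ ({σ₁ t, σ₂ t} : Set V) := by
        rw [Submodule.span_le]
        intro x hx
        simp only [Set.mem_insert_iff, Set.mem_singleton_iff] at hx
        rcases hx with rfl | rfl | rfl | rfl
        · exact Submodule.subset_span (by simp)
        · exact Submodule.subset_span (by simp)
        · exact hmem1
        · exact hmem2
      have hle2 : Module.finrank ℝ
          ↥(Submodule.span ℝ ({σ₁ t, σ₂ t} : Set V)) ≤ 2 := by
        have hfin : ({σ₁ t, σ₂ t} : Set V) = ↑({σ₁ t, σ₂ t} : Finset V) := by simp
        rw [hfin]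
        refine (finrank_span_finset_le_card _).trans ?_
        refine (Finset.card_insert_le _ _).trans ?_
        simp
      have h3 := h.rank3 t ht
      have hmono := Submodule.finrank_mono hspanle
      omega
  -- 4. linear conserved quantities
  · intro w hw
    obtain ⟨l1, l2, hwrep⟩ := hrep w hw
    refine ⟨fun t => (l1 * D11 t + l2 * D21 t) • σ₁ t + (l1 * D12 t + l2 * D22 t) • σ₂ t,
      ?_, ?_, ?_⟩
    · exact ((((contDiffOn_const.mul hD11s).add (contDiffOn_const.mul hD21s)).smul h.smooth₁).add
        (((contDiffOn_const.mul hD12s).add (contDiffOn_const.mul hD22s)).smul h.smooth₂))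
    · intro t ht
      exact ⟨l1 * D11 t + l2 * D21 t, l1 * D12 t + l2 * D22 t, rfl⟩
    · intro t ht
      -- derivative facts
      have hσ₁d : HasDerivAt σ₁ (deriv σ₁ t) t :=
        ((h.smooth₁.contDiffAt (h.isOpen.mem_nhds ht)).differentiableAt (by simp)).hasDerivAt
      have hσ₂d : HasDerivAt σ₂ (deriv σ₂ t) t :=
        ((h.smooth₂.contDiffAt (h.isOpen.mem_nhds ht)).differentiableAt (by simp)).hasDerivAt
      have hc11d : HasDerivAt c11 (g11 t) t := by
        simp only [hc11def, hg11def]; exact hasDerivAt_bB hσ₁d E1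
      have hc12d : HasDerivAt c12 (g12 t) t := by
        simp only [hc12def, hg12def]; exact hasDerivAt_bB hσ₁d E2
      have hc21d : HasDerivAt c21 (g21 t) t := by
        simp only [hc21def, hg21def]; exact hasDerivAt_bB hσ₂d E1
      have hc22d : HasDerivAt c22 (g22 t) t := by
        simp only [hc22def, hg22def]; exact hasDerivAt_bB hσ₂d E2
      have hne : dl t ≠ 0 := hdlne t ht
      set dlp : ℝ := g11 t * c22 t + c11 t * g22 t - (g12 t * c21 t + c12 t * g21 t)
        with hdlpdef
      have hdld : HasDerivAt dl dlp t := by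
        rw [hdlpdef]; simp only [hdldef]
        exact (hc11d.mul hc22d).sub (hc12d.mul hc21d)
      have hD11d : HasDerivAt D11 ((g22 t * dl t - c22 t * dlp) / dl t ^ 2) t := by
        simp only [hD11def]; exact hc22d.div hdld hne
      have hD12d : HasDerivAt D12 ((-g12 t * dl t - -c12 t * dlp) / dl t ^ 2) t := by
        simp only [hD12def]; exact hc12d.neg.div hdld hne
      have hD21d : HasDerivAt D21 ((-g21 t * dl t - -c21 t * dlp) / dl t ^ 2) t := by
        simp only [hD21def]; exact hc21d.neg.div hdld hne
      have hD22d : HasDerivAt D22 ((g11 t * dl t - c11 t * dlp) / dl t ^ 2) t := by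
        simp only [hD22def]; exact hc11d.div hdld hne
      have hf1d : HasDerivAt (fun s => l1 * D11 s + l2 * D21 s)
          (l1 * ((g22 t * dl t - c22 t * dlp) / dl t ^ 2)
            + l2 * ((-g21 t * dl t - -c21 t * dlp) / dl t ^ 2)) t :=
        (hD11d.const_mul l1).add (hD21d.const_mul l2)
      have hf2d : HasDerivAt (fun s => l1 * D12 s + l2 * D22 s)
          (l1 * ((-g12 t * dl t - -c12 t * dlp) / dl t ^ 2)
            + l2 * ((g11 t * dl t - c11 t * dlp) / dl t ^ 2)) t :=
        (hD12d.const_mul l1).add (hD22d.const_mul l2)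
      have hp1d := (hf1d.smul hσ₁d).add (hf2d.smul hσ₂d)
      rw [show deriv (fun t => (l1 * D11 t + l2 * D21 t) • σ₁ t
        + (l1 * D12 t + l2 * D22 t) • σ₂ t) t = _ from hp1d.deriv]
      -- value of ξ at w
      show _ + (wedge (σ₁ t) (b1v t) w + wedge (σ₂ t) (b2v t) w) = 0
      rw [wedge_apply, wedge_apply]
      -- scalar values of the pairings with w
      have hd1w : bB (σ₁ t) w = l1 * c11 t + l2 * c12 t := by
        rw [hwrep, bB_smul2_right, ec11 t, ec12 t]
      have hd2w : bB (σ₂ t) w = l1 * c21 t + l2 * c22 t := by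
        rw [hwrep, bB_smul2_right, ec21 t, ec22 t]
      have hg1w : bB (deriv σ₁ t) w = l1 * g11 t + l2 * g12 t := by
        rw [hwrep, bB_smul2_right, eg11 t, eg12 t]
      have hg2w : bB (deriv σ₂ t) w = l1 * g21 t + l2 * g22 t := by
        rw [hwrep, bB_smul2_right, eg21 t, eg22 t]
      have hbw1 : bB (b1v t) w = -(S11 t) * (l1 * g11 t + l2 * g12 t)
          + -(S12 t) * (l1 * g21 t + l2 * g22 t) := by
        rw [hb1vdef, bB_smul2_left, hg1w, hg2w]
      have hbw2 : bB (b2v t) w = (-(S12 t) * (l1 * g11 t + l2 * g12 t)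
          + -(S22 t) * (l1 * g21 t + l2 * g22 t))
          + zz t * (l1 * c11 t + l2 * c12 t) := by
        rw [hb2vdef, bB_add_left, bB_smul2_left, bB_smul_left, hg1w, hg2w, hd1w]
      rw [hd1w, hd2w, hbw1, hbw2, hb1vdef, hb2vdef]
      -- the four scalar coefficient identities
      have hK1 : (l1 * ((g22 t * dl t - c22 t * dlp) / dl t ^ 2)
            + l2 * ((-g21 t * dl t - -c21 t * dlp) / dl t ^ 2))
          + (l1 * c21 t + l2 * c22 t) * zz t
          + (S11 t * (l1 * g11 t + l2 * g12 t) + S12 t * (l1 * g21 t + l2 * g22 t)) = 0 := by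
        have hne' : c11 t * c22 t - c12 t * c21 t ≠ 0 := by rwa [hdldef] at hne
        rw [hzzdef, hS11def, hS12def, hD11def, hD12def, hD21def, hD22def, hdlpdef, hdldef]
        field_simp
        ring
      have hK2 : (l1 * ((-g12 t * dl t - -c12 t * dlp) / dl t ^ 2)
            + l2 * ((g11 t * dl t - c11 t * dlp) / dl t ^ 2))
          - (l1 * c11 t + l2 * c12 t) * zz t
          + (S12 t * (l1 * g11 t + l2 * g12 t) + S22 t * (l1 * g21 t + l2 * g22 t)) = 0 := by
        have hne' : c11 t * c22 t - c12 t * c21 t ≠ 0 := by rwa [hdldef] at hne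
        rw [hzzdef, hS12def, hS22def, hD11def, hD12def, hD21def, hD22def, hdlpdef, hdldef]
        field_simp
        ring
      have hK3 : (l1 * D11 t + l2 * D21 t)
          + (l1 * c11 t + l2 * c12 t) * (-(S11 t))
          + (l1 * c21 t + l2 * c22 t) * (-(S12 t)) = 0 := by
        have hne' : c11 t * c22 t - c12 t * c21 t ≠ 0 := by rwa [hdldef] at hne
        rw [hS11def, hS12def, hD11def, hD12def, hD21def, hD22def, hdldef]
        field_simp
        ring
      have hK4 : (l1 * D12 t + l2 * D22 t)
          + (l1 * c11 t + l2 * c12 t) * (-(S12 t))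
          + (l1 * c21 t + l2 * c22 t) * (-(S22 t)) = 0 := by
        have hne' : c11 t * c22 t - c12 t * c21 t ≠ 0 := by rwa [hdldef] at hne
        rw [hS12def, hS22def, hD11def, hD12def, hD21def, hD22def, hdldef]
        field_simp
        ring
      -- assemble
      have hfinal : ((l1 * D11 t + l2 * D21 t) • deriv σ₁ t
            + (l1 * ((g22 t * dl t - c22 t * dlp) / dl t ^ 2)
              + l2 * ((-g21 t * dl t - -c21 t * dlp) / dl t ^ 2)) • σ₁ t
          + ((l1 * D12 t + l2 * D22 t) • deriv σ₂ t
            + (l1 * ((-g12 t * dl t - -c12 t * dlp) / dl t ^ 2)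
              + l2 * ((g11 t * dl t - c11 t * dlp) / dl t ^ 2)) • σ₂ t))
          + ((l1 * c11 t + l2 * c12 t) • ((-(S11 t)) • deriv σ₁ t + (-(S12 t)) • deriv σ₂ t)
            - (-(S11 t) * (l1 * g11 t + l2 * g12 t)
              + -(S12 t) * (l1 * g21 t + l2 * g22 t)) • σ₁ t
          + ((l1 * c21 t + l2 * c22 t) • (((-(S12 t)) • deriv σ₁ t
              + (-(S22 t)) • deriv σ₂ t) + zz t • σ₁ t)
            - ((-(S12 t) * (l1 * g11 t + l2 * g12 t)
              + -(S22 t) * (l1 * g21 t + l2 * g22 t))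
              + zz t * (l1 * c11 t + l2 * c12 t)) • σ₂ t))
        = ((l1 * ((g22 t * dl t - c22 t * dlp) / dl t ^ 2)
            + l2 * ((-g21 t * dl t - -c21 t * dlp) / dl t ^ 2))
          + (l1 * c21 t + l2 * c22 t) * zz t
          + (S11 t * (l1 * g11 t + l2 * g12 t) + S12 t * (l1 * g21 t + l2 * g22 t))) • σ₁ t
        + ((l1 * ((-g12 t * dl t - -c12 t * dlp) / dl t ^ 2)
            + l2 * ((g11 t * dl t - c11 t * dlp) / dl t ^ 2))
          - (l1 * c11 t + l2 * c12 t) * zz t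
          + (S12 t * (l1 * g11 t + l2 * g12 t) + S22 t * (l1 * g21 t + l2 * g22 t))) • σ₂ t
        + ((l1 * D11 t + l2 * D21 t)
          + (l1 * c11 t + l2 * c12 t) * (-(S11 t))
          + (l1 * c21 t + l2 * c22 t) * (-(S12 t))) • deriv σ₁ t
        + ((l1 * D12 t + l2 * D22 t)
          + (l1 * c11 t + l2 * c12 t) * (-(S12 t))
          + (l1 * c21 t + l2 * c22 t) * (-(S22 t))) • deriv σ₂ t := by
        module
      rw [hfinal, hK1, hK2, hK3, hK4]
      simp
end
end

section
/- Let σ₁, σ₂ : U → V be a Legendre surface frame and let X : U → ℝ² be smooth and nowhere zero such that at every point of U the span of σ₁, σ₂, ∂_Xσ₁, ∂_Xσ₂ is 3-dimensional (X spans a curvature direction). Then every point of U has an open neighbourhood U′ on which there exists a smooth, nowhere-zero X̃ : U′ → ℝ² such that at every point of U′: X and X̃ are linearly independent; B(∂_Xσᵢ, ∂_X̃σⱼ) = 0 for all i, j ∈ {1,2}; and the span of σ₁, σ₂, ∂_X̃σ₁, ∂_X̃σ₂ is 3-dimensional. (Here ∂_Xσ(x) denotes the directional derivative dσ_x(X(x)).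 Thus the curvature direction X admits a complementary curvature direction X̃ with mutually orthogonal derived bundles.) -/
noncomputable section

/-- `V6 = ℝ⁶`. -/
abbrev V6 : Type := Fin 6 → ℝ

/-- The symmetric bilinear form of signature (4,2) on `V6`. -/
def bB6 (x y : V6) : ℝ :=
  x 0 * y 0 + x 1 * y 1 + x 2 * y 2 + x 3 * y 3 - x 4 * y 4 - x 5 * y 5

/-- The skew-symmetric endomorphism `a ∧ b` of `V6`. -/
def wedge6 (a b : V6) : V6 →L[ℝ] V6 :=
  LinearMap.toContinuousLinearMap
    { toFun := fun x => bB6 a x • b - bB6 b x • a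
      map_add' := by
        intro x y
        have h1 : bB6 a (x + y) = bB6 a x + bB6 a y := by simp [bB6]; ring
        have h2 : bB6 b (x + y) = bB6 b x + bB6 b y := by simp [bB6]; ring
        try dsimp only
        rw [h1, h2]; module
      map_smul' := by
        intro c x
        have h1 : bB6 a (c • x) = c * bB6 a x := by simp [bB6]; ring
        have h2 : bB6 b (c • x) = c * bB6 b x := by simp [bB6]; ring
        try dsimp only
        rw [h1, h2]
        try simp only [RingHom.id_apply]
        module }

/-- The partial derivative in the `u`-direction. -/
def pu (σ : ℝ × ℝ → V6) (x : ℝ × ℝ) : V6 := fderiv ℝ σ x (1, 0)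

/-- The partial derivative in the `v`-direction. -/
def pv (σ : ℝ × ℝ → V6) (x : ℝ × ℝ) : V6 := fderiv ℝ σ x (0, 1)

/-- A Legendre surface frame on an open connected set `U ⊆ ℝ²`: the contact lift of a
surface in Lie sphere geometry. -/
structure LegendreSurfaceFrame (U : Set (ℝ × ℝ)) (σ₁ σ₂ : ℝ × ℝ → V6) : Prop where
  isOpen : IsOpen U
  conn : IsConnected U
  smooth₁ : ContDiffOn ℝ (⊤ : ℕ∞) σ₁ U
  smooth₂ : ContDiffOn ℝ (⊤ : ℕ∞) σ₂ U
  indep : ∀ x ∈ U, ∀ a b : ℝ, a • σ₁ x + b • σ₂ x = 0 → a = 0 ∧ b = 0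
  iso₁₁ : ∀ x ∈ U, bB6 (σ₁ x) (σ₁ x) = 0
  iso₁₂ : ∀ x ∈ U, bB6 (σ₁ x) (σ₂ x) = 0
  iso₂₂ : ∀ x ∈ U, bB6 (σ₂ x) (σ₂ x) = 0
  du₁₁ : ∀ x ∈ U, bB6 (pu σ₁ x) (σ₁ x) = 0
  du₁₂ : ∀ x ∈ U, bB6 (pu σ₁ x) (σ₂ x) = 0
  du₂₁ : ∀ x ∈ U, bB6 (pu σ₂ x) (σ₁ x) = 0
  du₂₂ : ∀ x ∈ U, bB6 (pu σ₂ x) (σ₂ x) = 0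
  dv₁₁ : ∀ x ∈ U, bB6 (pv σ₁ x) (σ₁ x) = 0
  dv₁₂ : ∀ x ∈ U, bB6 (pv σ₁ x) (σ₂ x) = 0
  dv₂₁ : ∀ x ∈ U, bB6 (pv σ₂ x) (σ₁ x) = 0
  dv₂₂ : ∀ x ∈ U, bB6 (pv σ₂ x) (σ₂ x) = 0
  legendre : ∀ x ∈ U, ∀ X : ℝ × ℝ, X ≠ 0 →
    ¬((∃ a b : ℝ, fderiv ℝ σ₁ x X = a • σ₁ x + b • σ₂ x) ∧
      (∃ a b : ℝ, fderiv ℝ σ₂ x X = a • σ₁ x + b • σ₂ x))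

/-! ### Auxiliary material for the proof of `stmt18`. -/

namespace Aux18

open Module Topology

set_option maxHeartbeats 1000000

lemma bB6_comm (x y : V6) : bB6 x y = bB6 y x := by simp [bB6]; ring

lemma bB6_add_left (x y z : V6) : bB6 (x + y) z = bB6 x z + bB6 y z := by simp [bB6]; ring
lemma bB6_smul_left (a : ℝ) (x z : V6) : bB6 (a • x) z = a * bB6 x z := by simp [bB6]; ring
lemma bB6_add_right (x y z : V6) : bB6 x (y + z) = bB6 x y + bB6 x z := by simp [bB6]; ring
lemma bB6_smul_right (a : ℝ) (x z : V6) : bB6 x (a • z) = a * bB6 x z := by simp [bB6]; ring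

/-- `bB6` as a bilinear form. -/
def bForm : LinearMap.BilinForm ℝ V6 :=
  LinearMap.mk₂ ℝ bB6 bB6_add_left bB6_smul_left bB6_add_right bB6_smul_right

@[simp] lemma bForm_apply (x y : V6) : bForm x y = bB6 x y := rfl

lemma bForm_refl : bForm.IsRefl := by
  intro x y hxy
  simpa [bB6_comm y x] using hxy

lemma bForm_nondeg : bForm.Nondegenerate := by
  refine (LinearMap.IsRefl.nondegenerate_iff_separatingLeft bForm_refl).2 ?_
  intro v hv
  funext i
  fin_cases i
  · simpa [bB6, Pi.single_apply] using hv (Pi.single 0 1)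
  · simpa [bB6, Pi.single_apply] using hv (Pi.single 1 1)
  · simpa [bB6, Pi.single_apply] using hv (Pi.single 2 1)
  · simpa [bB6, Pi.single_apply] using hv (Pi.single 3 1)
  · simpa [bB6, Pi.single_apply] using hv (Pi.single 4 1)
  · simpa [bB6, Pi.single_apply] using hv (Pi.single 5 1)

lemma sq_four_zero {p q r s : ℝ} (h : p ^ 2 + q ^ 2 + r ^ 2 + s ^ 2 = 0) :
    p = 0 ∧ q = 0 ∧ r = 0 ∧ s = 0 := by
  refine ⟨?_, ?_, ?_, ?_⟩ <;>
    nlinarith [sq_nonneg p, sq_nonneg q, sq_nonneg r, sq_nonneg s]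

/-- No 3-dimensional totally isotropic subspace for signature (4,2). -/
lemma no_isotropic_three (s₁ s₂ d : V6)
    (h11 : bB6 s₁ s₁ = 0) (h12 : bB6 s₁ s₂ = 0) (h22 : bB6 s₂ s₂ = 0)
    (h1d : bB6 s₁ d = 0) (h2d : bB6 s₂ d = 0) (hdd : bB6 d d = 0)
    (hind : ∀ a b : ℝ, a • s₁ + b • s₂ = 0 → a = 0 ∧ b = 0) :
    ∃ a b : ℝ, d = a • s₁ + b • s₂ := by
  have h2 : ¬ LinearIndependent ℝ ![((s₁ 4, s₁ 5) : ℝ × ℝ), (s₂ 4, s₂ 5), (d 4, d 5)] := by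
    intro h
    have := h.fintype_card_le_finrank
    simp [finrank_prod] at this
  rw [Fintype.not_linearIndependent_iff] at h2
  obtain ⟨g, hg, i, hi⟩ := h2
  set a := g 0 with ha
  set b := g 1 with hb
  set c := g 2 with hc
  have hsum : a • ((s₁ 4, s₁ 5) : ℝ × ℝ) + b • (s₂ 4, s₂ 5) + c • (d 4, d 5) = 0 := by
    rw [← hg]; simp [Fin.sum_univ_three, ha, hb, hc]
  have h4 : a * s₁ 4 + b * s₂ 4 + c * d 4 = 0 := congrArg Prod.fst hsum
  have h5 : a * s₁ 5 + b * s₂ 5 + c * d 5 = 0 := congrArg Prod.snd hsum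
  have key : ∀ j : Fin 6, a * s₁ j + b * s₂ j + c * d j = 0 := by
    have hzz : (a * s₁ 0 + b * s₂ 0 + c * d 0) ^ 2 + (a * s₁ 1 + b * s₂ 1 + c * d 1) ^ 2
        + (a * s₁ 2 + b * s₂ 2 + c * d 2) ^ 2 + (a * s₁ 3 + b * s₂ 3 + c * d 3) ^ 2 = 0 := by
      simp only [bB6] at h11 h12 h22 h1d h2d hdd
      linear_combination (a^2) * h11 + (2*a*b) * h12 + (b^2) * h22 + (2*a*c) * h1d
        + (2*b*c) * h2d + (c^2) * hdd + (a * s₁ 4 + b * s₂ 4 + c * d 4 + 0) * h4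
        + (a * s₁ 5 + b * s₂ 5 + c * d 5 + 0) * h5
    obtain ⟨e0, e1, e2, e3⟩ := sq_four_zero hzz
    intro j
    fin_cases j <;> assumption
  by_cases hc0 : c = 0
  · exfalso
    have h0 : a • s₁ + b • s₂ = 0 := by
      funext j
      have := key j
      rw [hc0] at this
      simpa using this
    obtain ⟨ha0, hb0⟩ := hind a b h0
    fin_cases i
    · exact hi ha0
    · exact hi hb0
    · exact hi hc0
  · refine ⟨-a / c, -b / c, ?_⟩
    funext j
    have hzj := key j
    show d j = (-a / c) * s₁ j + (-b / c) * s₂ j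
    rw [div_mul_eq_mul_div, div_mul_eq_mul_div, ← add_div, eq_div_iff hc0]
    linarith [hzj]

lemma li_of_pair (s₁ s₂ d : V6) (hind : ∀ a b : ℝ, a • s₁ + b • s₂ = 0 → a = 0 ∧ b = 0)
    (hd : ∀ a b : ℝ, d ≠ a • s₁ + b • s₂) : LinearIndependent ℝ ![s₁, s₂, d] := by
  rw [Fintype.linearIndependent_iff]
  intro g hg
  have hsum : g 0 • s₁ + g 1 • s₂ + g 2 • d = 0 := by
    rw [← hg]; simp [Fin.sum_univ_three]
  by_cases hc0 : g 2 = 0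
  · have h0 : g 0 • s₁ + g 1 • s₂ = 0 := by rw [hc0] at hsum; simpa using hsum
    obtain ⟨h1, h2⟩ := hind _ _ h0
    intro i; fin_cases i <;> simp [h1, h2, hc0]
  · exfalso
    refine hd (-(g 0) / g 2) (-(g 1) / g 2) ?_
    funext j
    have hzj : g 0 * s₁ j + g 1 * s₂ j + g 2 * d j = 0 := by
      have := congrFun hsum j; simpa using this
    show d j = (-(g 0) / g 2) * s₁ j + (-(g 1) / g 2) * s₂ j
    rw [div_mul_eq_mul_div, div_mul_eq_mul_div, ← add_div, eq_div_iff hc0]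
    linarith [hzj]

lemma range_three (a b c : V6) : Set.range ![a, b, c] = {a, b, c} := by
  ext x
  constructor
  · rintro ⟨i, rfl⟩
    fin_cases i <;> simp
  · rintro (rfl | rfl | rfl)
    exacts [⟨0, rfl⟩, ⟨1, rfl⟩, ⟨2, rfl⟩]

lemma set_perm4 (a b c d : V6) : ({b, a, d, c} : Set V6) = {a, b, c, d} := by
  ext x; constructor <;> (intro h; simp at h ⊢; tauto)

lemma mem_span_triple {v a b c : V6} (h : v ∈ Submodule.span ℝ ({a, b, c} : Set V6)) :
    ∃ x y z : ℝ, v = x • a + y • b + z • c := by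
  rw [show ({a, b, c} : Set V6) = insert a (insert b {c}) from rfl,
    Submodule.mem_span_insert] at h
  obtain ⟨x, w, hw, rfl⟩ := h
  rw [Submodule.mem_span_insert] at hw
  obtain ⟨y, u, hu, rfl⟩ := hw
  rw [Submodule.mem_span_singleton] at hu
  obtain ⟨z, rfl⟩ := hu
  exact ⟨x, y, z, by module⟩

/-- `bB6` as a continuous bilinear map. -/
def Bc : V6 →L[ℝ] V6 →L[ℝ] ℝ :=
  LinearMap.toContinuousLinearMap
    { toFun := fun x => LinearMap.toContinuousLinearMap (bForm x)
      map_add' := by intro x y; ext w; simp [bForm, bB6_add_left]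
      map_smul' := by intro c x; ext w; simp [bForm, bB6_smul_left] }

@[simp] lemma Bc_apply (x y : V6) : Bc x y = bB6 x y := rfl

/-- The key symmetry via Schwarz' theorem: for a pair of maps with
`⟨dσa, σb⟩ = 0` on `U`, the form `⟨∂_Y σa, ∂_Z σb⟩` is symmetric in `(Y, Z)`. -/
lemma symm_second {U : Set (ℝ × ℝ)} (hU : IsOpen U) {σa σb : ℝ × ℝ → V6}
    (ha : ContDiffOn ℝ (⊤ : ℕ∞) σa U) (hb : ContDiffOn ℝ (⊤ : ℕ∞) σb U)
    (horth : ∀ y ∈ U, ∀ W : ℝ × ℝ, bB6 (fderiv ℝ σa y W) (σb y) = 0)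
    {x : ℝ × ℝ} (hx : x ∈ U) (Y Z : ℝ × ℝ) :
    bB6 (fderiv ℝ σa x Y) (fderiv ℝ σb x Z) = bB6 (fderiv ℝ σa x Z) (fderiv ℝ σb x Y) := by
  set A : (ℝ × ℝ) → (ℝ × ℝ) →L[ℝ] V6 := fun y => fderiv ℝ σa y with hA
  have hUx : U ∈ 𝓝 x := hU.mem_nhds hx
  have hdiffa : ∀ y ∈ U, HasFDerivAt σa (A y) y := fun y hy =>
    ((ha.contDiffAt (hU.mem_nhds hy)).differentiableAt (by norm_cast)).hasFDerivAt
  have hAsm : ContDiffOn ℝ (⊤ : ℕ∞) A U := by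
    have := (contDiffOn_infty_iff_fderiv_of_isOpen hU).1 ha
    exact this.2
  have hAx : HasFDerivAt A (fderiv ℝ A x) x :=
    ((hAsm.contDiffAt hUx).differentiableAt (by norm_cast)).hasFDerivAt
  set A'' := fderiv ℝ A x with hA''
  have hschwarz : ∀ v w : ℝ × ℝ, A'' v w = A'' w v := by
    intro v w
    exact second_derivative_symmetric_of_eventually
      (Filter.mem_of_superset hUx hdiffa) hAx v w
  have hbx : HasFDerivAt σb (fderiv ℝ σb x) x :=
    ((hb.contDiffAt hUx).differentiableAt (by norm_cast)).hasFDerivAt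
  have main : ∀ W Z : ℝ × ℝ,
      bB6 (A x W) (fderiv ℝ σb x Z) + bB6 (A'' Z W) (σb x) = 0 := by
    intro W Z
    have hF : HasFDerivAt (fun y => A y W)
        ((A x).comp 0 + A''.flip W) x :=
      hAx.clm_apply (hasFDerivAt_const W x)
    have hc : HasFDerivAt (fun y => Bc (A y W))
        (Bc.comp ((A x).comp 0 + A''.flip W)) x :=
      (Bc.hasFDerivAt).comp x hF
    have hg : HasFDerivAt (fun y => Bc (A y W) (σb y))
        ((Bc (A x W)).comp (fderiv ℝ σb x)
          + (Bc.comp ((A x).comp 0 + A''.flip W)).flip (σb x)) x :=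
      hc.clm_apply hbx
    have hzero : HasFDerivAt (fun y => Bc (A y W) (σb y)) (0 : (ℝ × ℝ) →L[ℝ] ℝ) x := by
      have heq : (fun y => Bc (A y W) (σb y)) =ᶠ[𝓝 x] fun _ => (0 : ℝ) := by
        filter_upwards [hUx] with y hy
        simpa using horth y hy W
      exact (hasFDerivAt_const (𝕜 := ℝ) (0 : ℝ) x).congr_of_eventuallyEq heq
    have huniq := hg.unique hzero
    have := congrFun (congrArg DFunLike.coe huniq) Z
    simpa [ContinuousLinearMap.add_apply, ContinuousLinearMap.comp_apply,
      ContinuousLinearMap.flip_apply] using this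
  have h1 := main Y Z
  have h2 := main Z Y
  rw [hschwarz Z Y] at h1
  linarith [h1, h2]

lemma contDiffOn_bB6 {s : Set (ℝ × ℝ)} {F G : ℝ × ℝ → V6}
    (hF : ContDiffOn ℝ (⊤ : ℕ∞) F s) (hG : ContDiffOn ℝ (⊤ : ℕ∞) G s) :
    ContDiffOn ℝ (⊤ : ℕ∞) (fun x => bB6 (F x) (G x)) s := by
  have hFi : ∀ i, ContDiffOn ℝ (⊤ : ℕ∞) (fun x => F x i) s := fun i => contDiffOn_pi.1 hF i
  have hGi : ∀ i, ContDiffOn ℝ (⊤ : ℕ∞) (fun x => G x i) s := fun i => contDiffOn_pi.1 hG i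
  show ContDiffOn ℝ (⊤ : ℕ∞)
    (fun x => F x 0 * G x 0 + F x 1 * G x 1 + F x 2 * G x 2 + F x 3 * G x 3
      - F x 4 * G x 4 - F x 5 * G x 5) s
  exact (((((hFi 0).mul (hGi 0)).add ((hFi 1).mul (hGi 1))).add
    ((hFi 2).mul (hGi 2))).add ((hFi 3).mul (hGi 3))).sub
    ((hFi 4).mul (hGi 4)) |>.sub ((hFi 5).mul (hGi 5))

lemma prod_decomp (W : ℝ × ℝ) : W = W.1 • ((1 : ℝ), (0 : ℝ)) + W.2 • ((0 : ℝ), (1 : ℝ)) := by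
  ext <;> simp

lemma fderiv_orth {σ τ : ℝ × ℝ → V6} {x : ℝ × ℝ}
    (hdu : bB6 (pu σ x) (τ x) = 0) (hdv : bB6 (pv σ x) (τ x) = 0) (W : ℝ × ℝ) :
    bB6 (fderiv ℝ σ x W) (τ x) = 0 := by
  rw [show fderiv ℝ σ x W = fderiv ℝ σ x (W.1 • ((1:ℝ),(0:ℝ)) + W.2 • ((0:ℝ),(1:ℝ))) from by
    rw [← prod_decomp W]]
  rw [map_add, (fderiv ℝ σ x).map_smul, (fderiv ℝ σ x).map_smul,
    bB6_add_left, bB6_smul_left, bB6_smul_left]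
  rw [show fderiv ℝ σ x (1, 0) = pu σ x from rfl, show fderiv ℝ σ x (0, 1) = pv σ x from rfl,
    hdu, hdv]
  ring

/-- The core construction, stated for an (possibly swapped) ordering `(σa, σb)` of the
frame, where `σa` is chosen so that `∂_X σa(x₀) ∉ span {σa x₀, σb x₀}`. -/
lemma core (U : Set (ℝ × ℝ)) (σa σb : ℝ × ℝ → V6)
    (hU : IsOpen U)
    (ha : ContDiffOn ℝ (⊤ : ℕ∞) σa U) (hb : ContDiffOn ℝ (⊤ : ℕ∞) σb U)
    (hiaa : ∀ x ∈ U, bB6 (σa x) (σa x) = 0)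
    (hiab : ∀ x ∈ U, bB6 (σa x) (σb x) = 0)
    (hibb : ∀ x ∈ U, bB6 (σb x) (σb x) = 0)
    (hoaa : ∀ x ∈ U, ∀ W : ℝ × ℝ, bB6 (fderiv ℝ σa x W) (σa x) = 0)
    (hoab : ∀ x ∈ U, ∀ W : ℝ × ℝ, bB6 (fderiv ℝ σa x W) (σb x) = 0)
    (hoba : ∀ x ∈ U, ∀ W : ℝ × ℝ, bB6 (fderiv ℝ σb x W) (σa x) = 0)
    (hobb : ∀ x ∈ U, ∀ W : ℝ × ℝ, bB6 (fderiv ℝ σb x W) (σb x) = 0)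
    (hind : ∀ x ∈ U, ∀ a b : ℝ, a • σa x + b • σb x = 0 → a = 0 ∧ b = 0)
    (hleg : ∀ x ∈ U, ∀ W : ℝ × ℝ, W ≠ 0 →
      ¬((∃ a b : ℝ, fderiv ℝ σa x W = a • σa x + b • σb x) ∧
        (∃ a b : ℝ, fderiv ℝ σb x W = a • σa x + b • σb x)))
    (X : ℝ × ℝ → ℝ × ℝ) (hXs : ContDiffOn ℝ (⊤ : ℕ∞) X U)
    (hX3 : ∀ x ∈ U, Module.finrank ℝ
      ↥(Submodule.span ℝ
        ({σa x, σb x, fderiv ℝ σa x (X x), fderiv ℝ σb x (X x)} : Set V6)) = 3)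
    (x₀ : ℝ × ℝ) (hx₀ : x₀ ∈ U)
    (hk : ¬ ∃ a b : ℝ, fderiv ℝ σa x₀ (X x₀) = a • σa x₀ + b • σb x₀) :
    ∃ U' : Set (ℝ × ℝ), IsOpen U' ∧ x₀ ∈ U' ∧ U' ⊆ U ∧
      ∃ X' : ℝ × ℝ → ℝ × ℝ, ContDiffOn ℝ (⊤ : ℕ∞) X' U' ∧
        ∀ x ∈ U', X' x ≠ 0 ∧
          LinearIndependent ℝ ![X x, X' x] ∧
          (bB6 (fderiv ℝ σa x (X x)) (fderiv ℝ σa x (X' x)) = 0 ∧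
           bB6 (fderiv ℝ σa x (X x)) (fderiv ℝ σb x (X' x)) = 0 ∧
           bB6 (fderiv ℝ σb x (X x)) (fderiv ℝ σa x (X' x)) = 0 ∧
           bB6 (fderiv ℝ σb x (X x)) (fderiv ℝ σb x (X' x)) = 0) ∧
          Module.finrank ℝ
            ↥(Submodule.span ℝ
              ({σa x, σb x, fderiv ℝ σa x (X' x), fderiv ℝ σb x (X' x)} : Set V6)) = 3 := by
  classical
  have hA : ContDiffOn ℝ (⊤ : ℕ∞) (fun y => fderiv ℝ σa y) U :=
    ((contDiffOn_infty_iff_fderiv_of_isOpen hU).1 ha).2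
  set ψ₁ : ℝ × ℝ → ℝ := fun x => bB6 (fderiv ℝ σa x (X x)) (fderiv ℝ σa x (1, 0)) with hψ₁def
  set ψ₂ : ℝ × ℝ → ℝ := fun x => bB6 (fderiv ℝ σa x (X x)) (fderiv ℝ σa x (0, 1)) with hψ₂def
  set q : ℝ × ℝ → ℝ := fun x => bB6 (fderiv ℝ σa x (X x)) (fderiv ℝ σa x (X x)) with hqdef
  have hFX : ContDiffOn ℝ (⊤ : ℕ∞) (fun x => fderiv ℝ σa x (X x)) U := hA.clm_apply hXs
  have hFe₁ : ContDiffOn ℝ (⊤ : ℕ∞) (fun x => fderiv ℝ σa x (1, 0)) U :=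
    hA.clm_apply contDiffOn_const
  have hFe₂ : ContDiffOn ℝ (⊤ : ℕ∞) (fun x => fderiv ℝ σa x (0, 1)) U :=
    hA.clm_apply contDiffOn_const
  have hψ₁s : ContDiffOn ℝ (⊤ : ℕ∞) ψ₁ U := contDiffOn_bB6 hFX hFe₁
  have hψ₂s : ContDiffOn ℝ (⊤ : ℕ∞) ψ₂ U := contDiffOn_bB6 hFX hFe₂
  have hqs : ContDiffOn ℝ (⊤ : ℕ∞) q U := contDiffOn_bB6 hFX hFX
  set X' : ℝ × ℝ → ℝ × ℝ := fun x => (-(ψ₂ x), ψ₁ x) with hX'def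
  have hX's : ContDiffOn ℝ (⊤ : ℕ∞) X' U := (hψ₂s.neg).prodMk hψ₁s
  set U' : Set (ℝ × ℝ) := U ∩ q ⁻¹' ({0}ᶜ) with hU'def
  have hU'open : IsOpen U' :=
    hqs.continuousOn.isOpen_inter_preimage hU isOpen_compl_singleton
  have hqx₀ : q x₀ ≠ 0 := by
    intro h0
    refine hk ?_
    exact no_isotropic_three (σa x₀) (σb x₀) (fderiv ℝ σa x₀ (X x₀))
      (hiaa x₀ hx₀) (hiab x₀ hx₀) (hibb x₀ hx₀)
      (by rw [bB6_comm]; exact hoaa x₀ hx₀ _)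
      (by rw [bB6_comm]; exact hoab x₀ hx₀ _)
      h0 (hind x₀ hx₀)
  refine ⟨U', hU'open, ⟨hx₀, by simpa using hqx₀⟩, Set.inter_subset_left,
    X', hX's.mono Set.inter_subset_left, ?_⟩
  rintro x ⟨hxU, hqx'⟩
  have hqx : q x ≠ 0 := by simpa using hqx'
  -- abbreviations
  set d : V6 := fderiv ℝ σa x (X x) with hddef
  -- the linear functional `W ↦ bB6 d (∂_W σa)`
  have hφ : ∀ W : ℝ × ℝ, bB6 d (fderiv ℝ σa x W) = W.1 * ψ₁ x + W.2 * ψ₂ x := by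
    intro W
    conv_lhs => rw [show fderiv ℝ σa x W
      = fderiv ℝ σa x (W.1 • ((1:ℝ),(0:ℝ)) + W.2 • ((0:ℝ),(1:ℝ))) from by rw [← prod_decomp W]]
    rw [map_add, (fderiv ℝ σa x).map_smul, (fderiv ℝ σa x).map_smul,
      bB6_add_right, bB6_smul_right, bB6_smul_right]
  have hφX' : bB6 d (fderiv ℝ σa x (X' x)) = 0 := by
    rw [hφ (X' x)]
    show -(ψ₂ x) * ψ₁ x + ψ₁ x * ψ₂ x = 0
    ring
  have hφX : bB6 d (fderiv ℝ σa x (X x)) = q x := rfl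
  -- `d` is not in the span of `σa x, σb x`
  have hd_notspan : ∀ a b : ℝ, d ≠ a • σa x + b • σb x := by
    intro a b hcontra
    apply hqx
    have h1 : bB6 d d = bB6 (a • σa x + b • σb x) d := by rw [← hcontra]
    have h2 : bB6 (a • σa x + b • σb x) d
        = a * bB6 (σa x) d + b * bB6 (σb x) d := by
      rw [bB6_add_left, bB6_smul_left, bB6_smul_left]
    have h3 : bB6 (σa x) d = 0 := by rw [bB6_comm]; exact hoaa x hxU _
    have h4 : bB6 (σb x) d = 0 := by rw [bB6_comm]; exact hoab x hxU _
    show q x = 0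
    calc q x = bB6 d d := rfl
      _ = a * bB6 (σa x) d + b * bB6 (σb x) d := by rw [h1, h2]
      _ = 0 := by rw [h3, h4]; ring
  have li3 : LinearIndependent ℝ ![σa x, σb x, d] :=
    li_of_pair (σa x) (σb x) d (hind x hxU) hd_notspan
  have h3rank : Module.finrank ℝ
      ↥(Submodule.span ℝ ({σa x, σb x, d} : Set V6)) = 3 := by
    rw [← range_three, finrank_span_eq_card li3]
    simp
  -- the span of the 4-set for `X` equals the span of `{σa x, σb x, d}`
  have hspan_eq : Submodule.span ℝ ({σa x, σb x, d} : Set V6)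
      = Submodule.span ℝ ({σa x, σb x, d, fderiv ℝ σb x (X x)} : Set V6) := by
    apply Submodule.eq_of_le_of_finrank_eq
    · exact Submodule.span_mono (by intro v hv; simp at hv ⊢; tauto)
    · rw [h3rank, hX3 x hxU]
  have hDbX : fderiv ℝ σb x (X x) ∈ Submodule.span ℝ ({σa x, σb x, d} : Set V6) := by
    rw [hspan_eq]
    exact Submodule.subset_span (by simp)
  obtain ⟨β₁, β₂, β₃, hβ⟩ := mem_span_triple hDbX
  -- symmetry instances
  have hsymm_ab : ∀ Y Z : ℝ × ℝ,
      bB6 (fderiv ℝ σa x Y) (fderiv ℝ σb x Z) = bB6 (fderiv ℝ σa x Z) (fderiv ℝ σb x Y) :=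
    symm_second hU ha hb (fun y hy W => hoab y hy W) hxU
  -- orthogonality of the derived bundles
  have Oaa : bB6 d (fderiv ℝ σa x (X' x)) = 0 := hφX'
  have Oab : bB6 d (fderiv ℝ σb x (X' x)) = 0 := by
    have h1 : bB6 d (fderiv ℝ σb x (X' x))
        = bB6 (fderiv ℝ σa x (X' x)) (fderiv ℝ σb x (X x)) := hsymm_ab (X x) (X' x)
    rw [h1, hβ, bB6_add_right, bB6_add_right, bB6_smul_right, bB6_smul_right, bB6_smul_right]
    rw [hoaa x hxU _, hoab x hxU _, bB6_comm _ d, Oaa]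
    ring
  have Oba : bB6 (fderiv ℝ σb x (X x)) (fderiv ℝ σa x (X' x)) = 0 := by
    rw [hβ, bB6_add_left, bB6_add_left, bB6_smul_left, bB6_smul_left, bB6_smul_left]
    have h1 : bB6 (σa x) (fderiv ℝ σa x (X' x)) = 0 := by rw [bB6_comm]; exact hoaa x hxU _
    have h2 : bB6 (σb x) (fderiv ℝ σa x (X' x)) = 0 := by rw [bB6_comm]; exact hoab x hxU _
    rw [h1, h2, Oaa]; ring
  have Obb : bB6 (fderiv ℝ σb x (X x)) (fderiv ℝ σb x (X' x)) = 0 := by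
    rw [hβ, bB6_add_left, bB6_add_left, bB6_smul_left, bB6_smul_left, bB6_smul_left]
    have h1 : bB6 (σa x) (fderiv ℝ σb x (X' x)) = 0 := by rw [bB6_comm]; exact hoba x hxU _
    have h2 : bB6 (σb x) (fderiv ℝ σb x (X' x)) = 0 := by rw [bB6_comm]; exact hobb x hxU _
    rw [h1, h2, Oab]; ring
  -- `X' x ≠ 0`
  have hX'ne : X' x ≠ 0 := by
    intro h0
    apply hqx
    have h1 : ψ₁ x = 0 := congrArg Prod.snd h0
    have h2 : ψ₂ x = 0 := by
      have := congrArg Prod.fst h0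
      simpa [X'] using this
    have := hφ (X x)
    rw [h1, h2, hφX] at this
    simpa using this
  -- linear independence of `X x` and `X' x`
  have hli2 : LinearIndependent ℝ ![X x, X' x] := by
    rw [linearIndependent_fin2]
    constructor
    · simpa using hX'ne
    · intro a hcontra
      simp only [Matrix.cons_val_one, Matrix.head_cons, Matrix.cons_val_zero] at hcontra
      apply hqx
      have e1 : (X x).1 = a * (X' x).1 := by rw [← hcontra]; simp
      have e2 : (X x).2 = a * (X' x).2 := by rw [← hcontra]; simp
      have h2 := hφ (X' x)
      rw [hφX'] at h2
      have h1 := hφ (X x)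
      rw [hφX, e1, e2] at h1
      rw [h1]
      linear_combination a * h2.symm
  -- rank 3 for `X'`
  have hrank' : Module.finrank ℝ
      ↥(Submodule.span ℝ
        ({σa x, σb x, fderiv ℝ σa x (X' x), fderiv ℝ σb x (X' x)} : Set V6)) = 3 := by
    have hupper : Module.finrank ℝ
        ↥(Submodule.span ℝ
          ({σa x, σb x, fderiv ℝ σa x (X' x), fderiv ℝ σb x (X' x)} : Set V6)) ≤ 3 := by
      have hsub : Submodule.span ℝ
          ({σa x, σb x, fderiv ℝ σa x (X' x), fderiv ℝ σb x (X' x)} : Set V6)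
          ≤ bForm.orthogonal (Submodule.span ℝ ({σa x, σb x, d} : Set V6)) := by
        rw [Submodule.span_le]
        intro v hv
        have hgen : ∀ n ∈ ({σa x, σb x, d} : Set V6), bB6 n v = 0 := by
          intro n hn
          have hvs : v = σa x ∨ v = σb x ∨ v = fderiv ℝ σa x (X' x)
              ∨ v = fderiv ℝ σb x (X' x) := by simpa using hv
          have hns : n = σa x ∨ n = σb x ∨ n = d := by simpa using hn
          rcases hns with rfl | rfl | rfl <;> rcases hvs with rfl | rfl | rfl | rfl
          · exact hiaa x hxU
          · exact hiab x hxU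
          · rw [bB6_comm]; exact hoaa x hxU _
          · rw [bB6_comm]; exact hoba x hxU _
          · rw [bB6_comm]; exact hiab x hxU
          · exact hibb x hxU
          · rw [bB6_comm]; exact hoab x hxU _
          · rw [bB6_comm]; exact hobb x hxU _
          · exact hoaa x hxU _
          · exact hoab x hxU _
          · exact Oaa
          · exact Oab
        rw [SetLike.mem_coe, LinearMap.BilinForm.mem_orthogonal_iff]
        intro n hn
        induction hn using Submodule.span_induction with
        | mem m hm => exact hgen m hm
        | zero => show bB6 0 v = 0; simp [bB6]
        | add m₁ m₂ _ _ h₁ h₂ =>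
          have e1 : bB6 m₁ v = 0 := h₁
          have e2 : bB6 m₂ v = 0 := h₂
          show bB6 (m₁ + m₂) v = 0
          rw [bB6_add_left, e1, e2]; ring
        | smul c m _ hm =>
          have e1 : bB6 m v = 0 := hm
          show bB6 (c • m) v = 0
          rw [bB6_smul_left, e1]; ring
      have horthrank : Module.finrank ℝ
          ↥(bForm.orthogonal (Submodule.span ℝ ({σa x, σb x, d} : Set V6))) = 3 := by
        rw [LinearMap.BilinForm.finrank_orthogonal bForm_nondeg, h3rank]
        rw [show Module.finrank ℝ V6 = 6 from by simp [Module.finrank_pi]]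
      exact le_trans (Submodule.finrank_mono hsub) (le_of_eq horthrank)
    have hlower : 3 ≤ Module.finrank ℝ
        ↥(Submodule.span ℝ
          ({σa x, σb x, fderiv ℝ σa x (X' x), fderiv ℝ σb x (X' x)} : Set V6)) := by
      have hl := hleg x hxU (X' x) hX'ne
      rw [not_and_or] at hl
      rcases hl with hl | hl
      · push_neg at hl
        have li3' : LinearIndependent ℝ ![σa x, σb x, fderiv ℝ σa x (X' x)] :=
          li_of_pair _ _ _ (hind x hxU) hl
        have : Module.finrank ℝ
            ↥(Submodule.span ℝ ({σa x, σb x, fderiv ℝ σa x (X' x)} : Set V6)) = 3 := by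
          rw [← range_three, finrank_span_eq_card li3']; simp
        rw [← this]
        exact Submodule.finrank_mono
          (Submodule.span_mono (by intro v hv; simp at hv ⊢; tauto))
      · push_neg at hl
        have li3' : LinearIndependent ℝ ![σa x, σb x, fderiv ℝ σb x (X' x)] :=
          li_of_pair _ _ _ (hind x hxU) hl
        have : Module.finrank ℝ
            ↥(Submodule.span ℝ ({σa x, σb x, fderiv ℝ σb x (X' x)} : Set V6)) = 3 := by
          rw [← range_three, finrank_span_eq_card li3']; simp
        rw [← this]
        exact Submodule.finrank_mono
          (Submodule.span_mono (by intro v hv; simp at hv ⊢; tauto))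
    omega
  exact ⟨hX'ne, hli2, ⟨Oaa, Oab, Oba, Obb⟩, hrank'⟩

end Aux18

open Aux18 in
/-- a curvature direction `X` locally admits a complementary curvature
direction `X̃` with mutually orthogonal derived bundles. -/
theorem stmt18 (U : Set (ℝ × ℝ)) (σ₁ σ₂ : ℝ × ℝ → V6)
    (h : LegendreSurfaceFrame U σ₁ σ₂)
    (X : ℝ × ℝ → ℝ × ℝ) (hXs : ContDiffOn ℝ (⊤ : ℕ∞) X U)
    (hX0 : ∀ x ∈ U, X x ≠ 0)
    (hX3 : ∀ x ∈ U, Module.finrank ℝ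
      ↥(Submodule.span ℝ
        ({σ₁ x, σ₂ x, fderiv ℝ σ₁ x (X x), fderiv ℝ σ₂ x (X x)} : Set V6)) = 3) :
    ∀ x₀ ∈ U, ∃ U' : Set (ℝ × ℝ), IsOpen U' ∧ x₀ ∈ U' ∧ U' ⊆ U ∧
      ∃ X' : ℝ × ℝ → ℝ × ℝ, ContDiffOn ℝ (⊤ : ℕ∞) X' U' ∧
        ∀ x ∈ U', X' x ≠ 0 ∧
          LinearIndependent ℝ ![X x, X' x] ∧
          (bB6 (fderiv ℝ σ₁ x (X x)) (fderiv ℝ σ₁ x (X' x)) = 0 ∧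
           bB6 (fderiv ℝ σ₁ x (X x)) (fderiv ℝ σ₂ x (X' x)) = 0 ∧
           bB6 (fderiv ℝ σ₂ x (X x)) (fderiv ℝ σ₁ x (X' x)) = 0 ∧
           bB6 (fderiv ℝ σ₂ x (X x)) (fderiv ℝ σ₂ x (X' x)) = 0) ∧
          Module.finrank ℝ
            ↥(Submodule.span ℝ
              ({σ₁ x, σ₂ x, fderiv ℝ σ₁ x (X' x), fderiv ℝ σ₂ x (X' x)} : Set V6)) = 3 := by
  intro x₀ hx₀
  have ho11 : ∀ x ∈ U, ∀ W : ℝ × ℝ, bB6 (fderiv ℝ σ₁ x W) (σ₁ x) = 0 :=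
    fun x hx W => fderiv_orth (h.du₁₁ x hx) (h.dv₁₁ x hx) W
  have ho12 : ∀ x ∈ U, ∀ W : ℝ × ℝ, bB6 (fderiv ℝ σ₁ x W) (σ₂ x) = 0 :=
    fun x hx W => fderiv_orth (h.du₁₂ x hx) (h.dv₁₂ x hx) W
  have ho21 : ∀ x ∈ U, ∀ W : ℝ × ℝ, bB6 (fderiv ℝ σ₂ x W) (σ₁ x) = 0 :=
    fun x hx W => fderiv_orth (h.du₂₁ x hx) (h.dv₂₁ x hx) W
  have ho22 : ∀ x ∈ U, ∀ W : ℝ × ℝ, bB6 (fderiv ℝ σ₂ x W) (σ₂ x) = 0 :=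
    fun x hx W => fderiv_orth (h.du₂₂ x hx) (h.dv₂₂ x hx) W
  have hl := h.legendre x₀ hx₀ (X x₀) (hX0 x₀ hx₀)
  rw [not_and_or] at hl
  rcases hl with hk | hk
  · -- `σa = σ₁`
    exact core U σ₁ σ₂ h.isOpen h.smooth₁ h.smooth₂ h.iso₁₁ h.iso₁₂ h.iso₂₂
      ho11 ho12 ho21 ho22 h.indep h.legendre X hXs hX3 x₀ hx₀ hk
  · -- `σa = σ₂`, with everything swapped
    have hiab' : ∀ x ∈ U, bB6 (σ₂ x) (σ₁ x) = 0 := fun x hx => by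
      rw [bB6_comm]; exact h.iso₁₂ x hx
    have hind' : ∀ x ∈ U, ∀ a b : ℝ, a • σ₂ x + b • σ₁ x = 0 → a = 0 ∧ b = 0 := by
      intro x hx a b hab
      have := h.indep x hx b a (by rw [add_comm]; exact hab)
      exact ⟨this.2, this.1⟩
    have hleg' : ∀ x ∈ U, ∀ W : ℝ × ℝ, W ≠ 0 →
        ¬((∃ a b : ℝ, fderiv ℝ σ₂ x W = a • σ₂ x + b • σ₁ x) ∧
          (∃ a b : ℝ, fderiv ℝ σ₁ x W = a • σ₂ x + b • σ₁ x)) := by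
      intro x hx W hW hc
      obtain ⟨⟨a2, b2, h2⟩, ⟨a1, b1, h1⟩⟩ := hc
      exact h.legendre x hx W hW
        ⟨⟨b1, a1, by rw [h1, add_comm]⟩, ⟨b2, a2, by rw [h2, add_comm]⟩⟩
    have hX3' : ∀ x ∈ U, Module.finrank ℝ
        ↥(Submodule.span ℝ
          ({σ₂ x, σ₁ x, fderiv ℝ σ₂ x (X x), fderiv ℝ σ₁ x (X x)} : Set V6)) = 3 := by
      intro x hx
      rw [set_perm4 (σ₁ x) (σ₂ x) (fderiv ℝ σ₁ x (X x)) (fderiv ℝ σ₂ x (X x))]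
      exact hX3 x hx
    have hk' : ¬ ∃ a b : ℝ, fderiv ℝ σ₂ x₀ (X x₀) = a • σ₂ x₀ + b • σ₁ x₀ := by
      intro hc
      obtain ⟨a, b, hab⟩ := hc
      exact hk ⟨b, a, by rw [hab, add_comm]⟩
    obtain ⟨U', hU'o, hx₀', hU'sub, X', hX's, hpt⟩ :=
      core U σ₂ σ₁ h.isOpen h.smooth₂ h.smooth₁ h.iso₂₂ hiab' h.iso₁₁
        ho22 ho21 ho12 ho11 hind' hleg' X hXs hX3' x₀ hx₀ hk'
    refine ⟨U', hU'o, hx₀', hU'sub, X', hX's, ?_⟩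
    intro x hx
    obtain ⟨hne, hli, ⟨O22, O21, O12, O11⟩, hrk⟩ := hpt x hx
    refine ⟨hne, hli, ⟨O11, O12, O21, O22⟩, ?_⟩
    rw [← set_perm4 (σ₁ x) (σ₂ x) (fderiv ℝ σ₁ x (X' x)) (fderiv ℝ σ₂ x (X' x))]
    exact hrk
end
end
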